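/- In the equality case of the ratio bound: with B, d, τ as above, if a coclique S satisfies |S| = |V(X)|/(1 - d/τ), then the vector ν_S - (|S|/|V(X)|)·1 is an eigenvector of B with eigenvalue τ, where ν_S is the characteristic vector of S. -/

import Mathlib

/-!
Since `τ` is the least eigenvalue of the symmetric matrix `B`, the matrix `B - τ I` is positive
semidefinite, so `zᵀ B z ≥ τ zᵀ z` for every `z`, with equality only if `B z = τ z`.
For `z = ν_S - (s/n) 𝟙` (with `s = |S|`, `n = |V|`), regularity and `B = 0` on `S × S` give
`zᵀ B z = -d s² / n` and `zᵀ z = s - s² / n`; the hypothesis `s = n / (1 - d/τ)` says precisely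
that these satisfy `zᵀ B z = τ zᵀ z`.
-/

open Finset Matrix

namespace Matrix

variable {V : Type*} [Fintype V]

theorem mulVec_one_eq_smul_one {B : Matrix V V ℝ} {d : ℝ} (hrow : ∀ u, ∑ v, B u v = d) :
    B *ᵥ 1 = d • 1 := by
  ext u
  simp [mulVec, dotProduct, hrow]

theorem IsSymm.one_vecMul_eq_smul_one {B : Matrix V V ℝ} (hB : B.IsSymm) {d : ℝ}
    (hrow : ∀ u, ∑ v, B u v = d) : 1 ᵥ* B = d • 1 := by
  rw [← mulVec_transpose, hB, mulVec_one_eq_smul_one hrow]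

variable [DecidableEq V]

theorem IsHermitian.posSemidef_sub_smul_one {B : Matrix V V ℝ} (hB : B.IsHermitian) {τ : ℝ}
    (hτ : ∀ μ : ℝ, (∃ x : V → ℝ, x ≠ 0 ∧ B *ᵥ x = μ • x) → τ ≤ μ) :
    (B - τ • 1).PosSemidef := by
  have hM : (B - τ • 1).IsHermitian := hB.sub (isHermitian_one.smul (IsSelfAdjoint.all τ))
  refine hM.posSemidef_iff_eigenvalues_nonneg.mpr fun i => ?_
  set v := hM.eigenvectorBasis i
  have hv : B *ᵥ ⇑v = (hM.eigenvalues i + τ) • ⇑v := by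
    have := hM.mulVec_eigenvectorBasis i
    rw [sub_mulVec, smul_mulVec, one_mulVec, sub_eq_iff_eq_add] at this
    rw [this, add_smul]
  have hv0 : ⇑v ≠ 0 := fun h =>
    hM.eigenvectorBasis.orthonormal.ne_zero i (by ext j; exact congrFun h j)
  exact le_add_iff_nonneg_left τ |>.mp (hτ _ ⟨_, hv0, hv⟩)

theorem mulVec_eq_smul_of_dotProduct_mulVec_eq {B : Matrix V V ℝ} {τ : ℝ}
    (hB : (B - τ • 1).PosSemidef) {z : V → ℝ} (hz : z ⬝ᵥ B *ᵥ z = τ * (z ⬝ᵥ z)) :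
    B *ᵥ z = τ • z := by
  have : (B - τ • 1) *ᵥ z = 0 := (hB.dotProduct_mulVec_zero_iff z).mp <| by
    rw [star_trivial, sub_mulVec, smul_mulVec, one_mulVec, dotProduct_sub, dotProduct_smul, hz,
      smul_eq_mul, sub_self]
  rwa [sub_mulVec, smul_mulVec, one_mulVec, sub_eq_zero] at this

end Matrix

section IndicatorVector

variable {V : Type*} [Fintype V] [DecidableEq V]

def indicatorVector (S : Finset V) : V → ℝ := fun v => if v ∈ S then 1 else 0

theorem indicatorVector_dotProduct_self (S : Finset V) :
    indicatorVector S ⬝ᵥ indicatorVector S = #S := by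
  simp [indicatorVector, dotProduct]

theorem indicatorVector_dotProduct_one (S : Finset V) : indicatorVector S ⬝ᵥ 1 = #S := by
  simp [indicatorVector, dotProduct_one]

theorem indicatorVector_dotProduct_mulVec {B : Matrix V V ℝ} {S : Finset V}
    (hS : ∀ u ∈ S, ∀ v ∈ S, B u v = 0) :
    indicatorVector S ⬝ᵥ B *ᵥ indicatorVector S = 0 := by
  simp +contextual [indicatorVector, dotProduct, mulVec, hS]

theorem dotProduct_self_indicatorVector_sub (S : Finset V) (a : ℝ) :
    (indicatorVector S - a • 1) ⬝ᵥ (indicatorVector S - a • 1) =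
      #S - 2 * a * #S + a ^ 2 * Fintype.card V := by
  simp only [sub_dotProduct, dotProduct_sub, smul_dotProduct, dotProduct_smul, smul_eq_mul,
    indicatorVector_dotProduct_self, indicatorVector_dotProduct_one, dotProduct_comm 1,
    one_dotProduct_one]
  ring

theorem dotProduct_mulVec_indicatorVector_sub {B : Matrix V V ℝ} (hB : B.IsSymm) {d : ℝ}
    (hrow : ∀ u, ∑ v, B u v = d) {S : Finset V} (hS : ∀ u ∈ S, ∀ v ∈ S, B u v = 0) (a : ℝ) :
    (indicatorVector S - a • 1) ⬝ᵥ B *ᵥ (indicatorVector S - a • 1) =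
      a * d * (a * Fintype.card V - 2 * #S) := by
  simp only [mulVec_sub, mulVec_smul, mulVec_one_eq_smul_one hrow, sub_dotProduct,
    dotProduct_sub, smul_dotProduct, dotProduct_smul, smul_eq_mul, dotProduct_mulVec 1,
    hB.one_vecMul_eq_smul_one hrow, indicatorVector_dotProduct_mulVec hS,
    indicatorVector_dotProduct_one, dotProduct_comm 1, one_dotProduct_one]
  ring

end IndicatorVector

/-- The factor `s` absorbs the case `d = τ`, where the division is by zero and `s = 0`. -/
theorem mul_sub_eq_zero_of_eq_div_one_sub_div {s n d τ : ℝ} (hτ : τ ≠ 0)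
    (h : s = n / (1 - d / τ)) : s * ((τ - d) * s - τ * n) = 0 := by
  rw [one_sub_div hτ] at h
  rcases eq_or_ne (τ - d) 0 with hc | hc
  · simp [h, hc]
  · rw [h]
    field_simp
    ring

theorem ratio_bound_equality_general {V : Type*} [Fintype V] [DecidableEq V] (X : SimpleGraph V)
    (B : Matrix V V ℝ)
    (hsymm : B.IsSymm) (hdiag : ∀ v, B v v = 0)
    (hsupp : ∀ u v, u ≠ v → ¬X.Adj u v → B u v = 0)
    (d τ : ℝ) (hτ : τ < 0)
    (hrow : ∀ u, ∑ v, B u v = d)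
    (hτleast : ∀ μ : ℝ, (∃ x : V → ℝ, x ≠ 0 ∧ B.mulVec x = μ • x) → τ ≤ μ)
    (S : Finset V) (hS : ∀ u ∈ S, ∀ v ∈ S, ¬X.Adj u v)
    (heq : (S.card : ℝ) = (Fintype.card V : ℝ) / (1 - d / τ)) :
    B.mulVec (fun v => (if v ∈ S then (1 : ℝ) else 0) - S.card / Fintype.card V) =
      τ • (fun v => (if v ∈ S then (1 : ℝ) else 0) - S.card / Fintype.card V) := by
  rcases isEmpty_or_nonempty V with _ | _
  · exact Subsingleton.elim _ _
  have hBS : ∀ u ∈ S, ∀ v ∈ S, B u v = 0 := fun u hu v hv => by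
    rcases eq_or_ne u v with rfl | huv
    exacts [hdiag u, hsupp u v huv (hS u hu v hv)]
  have hz : (fun v => (if v ∈ S then (1 : ℝ) else 0) - S.card / Fintype.card V) =
      indicatorVector S - ((S.card : ℝ) / Fintype.card V) • 1 := by
    ext; simp [indicatorVector]
  rw [hz]
  refine mulVec_eq_smul_of_dotProduct_mulVec_eq
    ((isHermitian_iff_isSymm.mpr hsymm).posSemidef_sub_smul_one hτleast) ?_
  rw [dotProduct_mulVec_indicatorVector_sub hsymm hrow hBS, dotProduct_self_indicatorVector_sub]
  have hn : (Fintype.card V : ℝ) ≠ 0 := by positivity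
  have := mul_sub_eq_zero_of_eq_div_one_sub_div hτ.ne heq
  field_simp
  linear_combination this

/-- Equality case of the Delsarte–Hoffman (ratio) bound: if a coclique `S` attains the
bound `|S| = |V| / (1 - d/τ)`, then `ν_S - (|S|/|V|)·𝟙` is an eigenvector of `B` with
eigenvalue `τ`. -/
theorem ratio_bound_equality {V : Type*} [Fintype V] [DecidableEq V] (X : SimpleGraph V)
    (B : Matrix V V ℝ)
    (hsymm : B.IsSymm) (hdiag : ∀ v, B v v = 0)
    (hsupp : ∀ u v, u ≠ v → ¬X.Adj u v → B u v = 0)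
    (d τ : ℝ) (hd : 0 < d) (hτ : τ < 0)
    (hrow : ∀ u, ∑ v, B u v = d)
    (hτeig : ∃ x : V → ℝ, x ≠ 0 ∧ B.mulVec x = τ • x)
    (hτleast : ∀ μ : ℝ, (∃ x : V → ℝ, x ≠ 0 ∧ B.mulVec x = μ • x) → τ ≤ μ)
    (S : Finset V) (hS : ∀ u ∈ S, ∀ v ∈ S, ¬X.Adj u v)
    (heq : (S.card : ℝ) = (Fintype.card V : ℝ) / (1 - d / τ)) :
    B.mulVec (fun v => (if v ∈ S then (1 : ℝ) else 0) - S.card / Fintype.card V) =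
      τ • (fun v => (if v ∈ S then (1 : ℝ) else 0) - S.card / Fintype.card V) :=
  ratio_bound_equality_general X B hsymm hdiag hsupp d τ hτ hrow hτleast S hS heq
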